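/- Let K be a field with char K ≠ 2, let (V, c) be a braided vector space over K such that c is of Hecke type of mark λ with λ ≠ 0 and (3)!_λ ≠ 0, and let b be a c-bracket on (V, c) such that the canonical map ι_{c,b} : V → U(V, c, b) is injective. Then b ∘ c = −b, b ∘ b₁ ∘ (λ²·id_{V⊗V⊗V} − λ·c₂ + c₂ ∘ c₁) = 0, and b ∘ b₂ ∘ (λ²·id_{V⊗V⊗V} − λ·c₁ + c₁ ∘ c₂) = 0. -/

import Mathlib

open TensorProduct

noncomputable section

variable {K : Type*} [Field K] {V : Type*} [AddCommGroup V] [Module K V]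

/-- The endomorphism `c ⊗ id_V` of `V ⊗ (V ⊗ V)` (transported along associativity). -/
def opC1 (c : V ⊗[K] V →ₗ[K] V ⊗[K] V) :
    V ⊗[K] (V ⊗[K] V) →ₗ[K] V ⊗[K] (V ⊗[K] V) :=
  (TensorProduct.assoc K V V V).toLinearMap ∘ₗ
    LinearMap.rTensor V c ∘ₗ (TensorProduct.assoc K V V V).symm.toLinearMap

/-- The endomorphism `id_V ⊗ c` of `V ⊗ (V ⊗ V)`. -/
def opC2 (c : V ⊗[K] V →ₗ[K] V ⊗[K] V) :
    V ⊗[K] (V ⊗[K] V) →ₗ[K] V ⊗[K] (V ⊗[K] V) :=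
  LinearMap.lTensor V c

/-- The map `b ⊗ id_V : V ⊗ (V ⊗ V) → V ⊗ V`. -/
def opB1 (b : V ⊗[K] V →ₗ[K] V) :
    V ⊗[K] (V ⊗[K] V) →ₗ[K] V ⊗[K] V :=
  LinearMap.rTensor V b ∘ₗ (TensorProduct.assoc K V V V).symm.toLinearMap

/-- The map `id_V ⊗ b : V ⊗ (V ⊗ V) → V ⊗ V`. -/
def opB2 (b : V ⊗[K] V →ₗ[K] V) :
    V ⊗[K] (V ⊗[K] V) →ₗ[K] V ⊗[K] V :=
  LinearMap.lTensor V b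

/-- The braid equation `c₁ ∘ c₂ ∘ c₁ = c₂ ∘ c₁ ∘ c₂`. -/
def BraidEq (c : V ⊗[K] V →ₗ[K] V ⊗[K] V) : Prop :=
  opC1 c ∘ₗ opC2 c ∘ₗ opC1 c = opC2 c ∘ₗ opC1 c ∘ₗ opC2 c

/-- `c` is of Hecke type of mark `lam`: `(c + id) ∘ (c - lam • id) = 0`. -/
def IsHecke (lam : K) (c : V ⊗[K] V →ₗ[K] V ⊗[K] V) : Prop :=
  (c + LinearMap.id) ∘ₗ (c - lam • LinearMap.id) = 0

/-- `b` is a `c`-bracket: `c ∘ b₁ = b₂ ∘ c₁ ∘ c₂` and `c ∘ b₂ = b₁ ∘ c₂ ∘ c₁`. -/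
def IsBracket (c : V ⊗[K] V →ₗ[K] V ⊗[K] V) (b : V ⊗[K] V →ₗ[K] V) : Prop :=
  c ∘ₗ opB1 b = opB2 b ∘ₗ opC1 c ∘ₗ opC2 c ∧
  c ∘ₗ opB2 b = opB1 b ∘ₗ opC2 c ∘ₗ opC1 c

/-- The linear map `V ⊗ V → T(V)`, `v ⊗ w ↦ ι v * ι w`. -/
def tensMul : V ⊗[K] V →ₗ[K] TensorAlgebra K V :=
  LinearMap.mul' K (TensorAlgebra K V) ∘ₗ
    TensorProduct.map (TensorAlgebra.ι K) (TensorAlgebra.ι K)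

/-- The relation on `T(V)` whose associated ring quotient is
`U(V,c,b) = T(V)/(c(z) - lam•z - b(z) : z ∈ V ⊗ V)`. -/
def envRel (lam : K) (c : V ⊗[K] V →ₗ[K] V ⊗[K] V) (b : V ⊗[K] V →ₗ[K] V) :
    TensorAlgebra K V → TensorAlgebra K V → Prop :=
  fun x y => ∃ z : V ⊗[K] V,
    x = tensMul (c z) ∧ y = lam • tensMul z + TensorAlgebra.ι K (b z)

/-- The canonical map `ι_{c,b} : V → U(V,c,b)`. -/
def envIota (lam : K) (c : V ⊗[K] V →ₗ[K] V ⊗[K] V) (b : V ⊗[K] V →ₗ[K] V) :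
    V →ₗ[K] RingQuot (envRel lam c b) :=
  (RingQuot.mkAlgHom K (envRel lam c b)).toLinearMap ∘ₗ TensorAlgebra.ι K

/-- The q-integer `(n)_lam = 1 + lam + ⋯ + lam^(n-1)`. -/
def qInt (lam : K) (n : ℕ) : K := ∑ i ∈ Finset.range n, lam ^ i

/-- The q-factorial `(n)!_lam = (1)_lam (2)_lam ⋯ (n)_lam`. -/
def qFac (lam : K) (n : ℕ) : K := ∏ i ∈ Finset.range n, qInt lam (i + 1)

/-!
Let `f : V → A` be a linear map into an algebra respecting the defining relations of
`U(V, c, b)`, put `M (v ⊗ w) = f v * f w`, `P (u ⊗ v ⊗ w) = f u * f v * f w`, and write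
`x = c₁`, `y = c₂`. Since `c (c z + z) = λ (c z + z)`, the relation gives `f (b (c z + z)) = 0`,
so `b ∘ c = -b` as soon as `f` is injective. The relation also gives `P ∘ x = λ P + M ∘ b₁` and
`P ∘ y = λ P + M ∘ b₂`, and expanding `P ∘ x y x = P ∘ y x y` relates `M ∘ b₁`, `M ∘ b₂`,
`f ∘ b ∘ b₁` and `f ∘ b ∘ b₂`.

For `λ = 1` this relation, together with `c ∘ b₁ ∘ y = b₂ ∘ x`, is exactly the pair of
identities. For `λ ≠ 1`, computing `c ∘ c ∘ b₁ ∘ y` once by the Hecke relation and once by the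
bracket relations forces `b₂ = -b₁` and `b₁ ∘ y = -b₁` (this is where `(3)_λ ≠ 0` enters). The
braid relation then reads `2 (3)_λ • M ∘ b₁ = 0`, hence `f ∘ b ∘ b₁ = -(1 + λ) • M ∘ b₁ = 0`,
and `b ∘ b₁ = b ∘ b₂ = 0`.
-/

section Operators

variable {lam : K} {c : V ⊗[K] V →ₗ[K] V ⊗[K] V} {b : V ⊗[K] V →ₗ[K] V}

lemma opC1_comp (f g : V ⊗[K] V →ₗ[K] V ⊗[K] V) : opC1 (f ∘ₗ g) = opC1 f ∘ₗ opC1 g := by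
  ext x
  simp [opC1]

lemma opC1_id : opC1 (K := K) (V := V) LinearMap.id = LinearMap.id := by
  simp [opC1]

lemma opC1_add (f g : V ⊗[K] V →ₗ[K] V ⊗[K] V) : opC1 (f + g) = opC1 f + opC1 g := by
  simp only [opC1, LinearMap.rTensor_add, LinearMap.add_comp, LinearMap.comp_add]

lemma opC1_smul (a : K) (f : V ⊗[K] V →ₗ[K] V ⊗[K] V) : opC1 (a • f) = a • opC1 f := by
  simp only [opC1, LinearMap.rTensor_smul, LinearMap.smul_comp, LinearMap.comp_smul]

lemma opB1_comp_opC1 (f : V ⊗[K] V →ₗ[K] V) (g : V ⊗[K] V →ₗ[K] V ⊗[K] V) :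
    opB1 f ∘ₗ opC1 g = opB1 (f ∘ₗ g) := by
  ext x
  simp [opB1, opC1]

lemma opB2_comp_opC2 (f : V ⊗[K] V →ₗ[K] V) (g : V ⊗[K] V →ₗ[K] V ⊗[K] V) :
    opB2 f ∘ₗ opC2 g = opB2 (f ∘ₗ g) :=
  (LinearMap.lTensor_comp V f g).symm

lemma opB1_comp_opC1_eq_neg (h : b ∘ₗ c = -b) : opB1 b ∘ₗ opC1 c = -opB1 b := by
  rw [opB1_comp_opC1, h]
  simp only [opB1, LinearMap.rTensor_neg, LinearMap.neg_comp]

lemma opB2_comp_opC2_eq_neg (h : b ∘ₗ c = -b) : opB2 b ∘ₗ opC2 c = -opB2 b := by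
  rw [opB2_comp_opC2, h]
  exact LinearMap.lTensor_neg b

lemma IsHecke.comp_self (h : IsHecke lam c) :
    c ∘ₗ c = (lam - 1) • c + lam • LinearMap.id := by
  simp only [IsHecke, LinearMap.comp_sub, LinearMap.add_comp, LinearMap.comp_smul,
    LinearMap.comp_id, LinearMap.id_comp] at h
  linear_combination (norm := module) h

lemma IsHecke.opC1_comp_opC1 (h : IsHecke lam c) :
    opC1 c ∘ₗ opC1 c = (lam - 1) • opC1 c + lam • LinearMap.id := by
  rw [← opC1_comp, h.comp_self, opC1_add, opC1_smul, opC1_smul, opC1_id]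

lemma IsHecke.opC2_comp_opC2 (h : IsHecke lam c) :
    opC2 c ∘ₗ opC2 c = (lam - 1) • opC2 c + lam • LinearMap.id := by
  rw [opC2, ← LinearMap.lTensor_comp, h.comp_self]
  simp only [LinearMap.lTensor_add, LinearMap.lTensor_smul, LinearMap.lTensor_id]

lemma IsHecke.comp_comp_self {W : Type*} [AddCommGroup W] [Module K W] (h : IsHecke lam c)
    (g : W →ₗ[K] V ⊗[K] V) : c ∘ₗ c ∘ₗ g = (lam - 1) • (c ∘ₗ g) + lam • g := by
  rw [← LinearMap.comp_assoc, h.comp_self, LinearMap.add_comp, LinearMap.smul_comp,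
    LinearMap.smul_comp, LinearMap.id_comp]

end Operators

section Brackets

variable {lam : K} {c : V ⊗[K] V →ₗ[K] V ⊗[K] V} {b : V ⊗[K] V →ₗ[K] V}

lemma IsBracket.comp_opB1_comp_opC2 (hb : IsBracket c b) (hH : IsHecke lam c) :
    c ∘ₗ opB1 b ∘ₗ opC2 c = (lam - 1) • (c ∘ₗ opB1 b) + lam • (opB2 b ∘ₗ opC1 c) := by
  rw [← LinearMap.comp_assoc, hb.1]
  simp only [LinearMap.comp_assoc, hH.opC2_comp_opC2, LinearMap.comp_add, LinearMap.comp_smul,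
    LinearMap.comp_id]

lemma IsBracket.comp_opB2_comp_opC1 (hb : IsBracket c b) (hH : IsHecke lam c) :
    c ∘ₗ opB2 b ∘ₗ opC1 c = (lam - 1) • (c ∘ₗ opB2 b) + lam • (opB1 b ∘ₗ opC2 c) := by
  rw [← LinearMap.comp_assoc, hb.2]
  simp only [LinearMap.comp_assoc, hH.opC1_comp_opC1, LinearMap.comp_add, LinearMap.comp_smul,
    LinearMap.comp_id]

lemma IsBracket.opB1_add_opB1_comp_opC2 (hb : IsBracket c b) (hH : IsHecke lam c)
    (hlam0 : lam ≠ 0) (hl1 : lam ≠ 1) :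
    opB1 b + opB1 b ∘ₗ opC2 c = opB2 b ∘ₗ opC1 c - c ∘ₗ opB2 b := by
  have h := congrArg (c ∘ₗ ·) (hb.comp_opB1_comp_opC2 hH)
  rw [hH.comp_comp_self] at h
  simp only [LinearMap.comp_add, LinearMap.comp_smul, hH.comp_comp_self,
    hb.comp_opB1_comp_opC2 hH, hb.comp_opB2_comp_opC1 hH] at h
  apply smul_right_injective _ (mul_ne_zero hlam0 (sub_ne_zero.mpr hl1))
  linear_combination (norm := module) -h

lemma IsBracket.opB2_add_opB2_comp_opC1 (hb : IsBracket c b) (hH : IsHecke lam c)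
    (hlam0 : lam ≠ 0) (hl1 : lam ≠ 1) :
    opB2 b + opB2 b ∘ₗ opC1 c = opB1 b ∘ₗ opC2 c - c ∘ₗ opB1 b := by
  have h := congrArg (c ∘ₗ ·) (hb.comp_opB2_comp_opC1 hH)
  rw [hH.comp_comp_self] at h
  simp only [LinearMap.comp_add, LinearMap.comp_smul, hH.comp_comp_self,
    hb.comp_opB1_comp_opC2 hH, hb.comp_opB2_comp_opC1 hH] at h
  apply smul_right_injective _ (mul_ne_zero hlam0 (sub_ne_zero.mpr hl1))
  linear_combination (norm := module) -h

lemma IsBracket.smul_opB1_add_opB1_comp_opC2 (hb : IsBracket c b) (hH : IsHecke lam c)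
    (hlam0 : lam ≠ 0) (hl1 : lam ≠ 1) (hbc : b ∘ₗ c = -b) :
    lam • (opB1 b + opB1 b ∘ₗ opC2 c) = c ∘ₗ (opB1 b + opB2 b) := by
  have h := congrArg (· ∘ₗ opC2 c) (hb.opB1_add_opB1_comp_opC2 hH hlam0 hl1)
  simp only [LinearMap.add_comp, LinearMap.sub_comp, LinearMap.comp_assoc,
    hH.opC2_comp_opC2, opB2_comp_opC2_eq_neg hbc, ← hb.1, LinearMap.comp_add,
    LinearMap.comp_smul, LinearMap.comp_id, LinearMap.comp_neg] at h
  rw [LinearMap.comp_add]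
  linear_combination (norm := module) h

lemma IsBracket.smul_opB2_add_opB2_comp_opC1 (hb : IsBracket c b) (hH : IsHecke lam c)
    (hlam0 : lam ≠ 0) (hl1 : lam ≠ 1) (hbc : b ∘ₗ c = -b) :
    lam • (opB2 b + opB2 b ∘ₗ opC1 c) = c ∘ₗ (opB1 b + opB2 b) := by
  have h := congrArg (· ∘ₗ opC1 c) (hb.opB2_add_opB2_comp_opC1 hH hlam0 hl1)
  simp only [LinearMap.add_comp, LinearMap.sub_comp, LinearMap.comp_assoc,
    hH.opC1_comp_opC1, opB1_comp_opC1_eq_neg hbc, ← hb.2, LinearMap.comp_add,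
    LinearMap.comp_smul, LinearMap.comp_id, LinearMap.comp_neg] at h
  rw [LinearMap.comp_add]
  linear_combination (norm := module) h

lemma IsBracket.comp_opB1_eq_neg (hb : IsBracket c b) (hH : IsHecke lam c)
    (hlam0 : lam ≠ 0) (hl1 : lam ≠ 1) (hbc : b ∘ₗ c = -b) : c ∘ₗ opB1 b = -opB1 b := by
  have h2 := hb.opB2_add_opB2_comp_opC1 hH hlam0 hl1
  have h1y := hb.smul_opB1_add_opB1_comp_opC2 hH hlam0 hl1 hbc
  have h2x := hb.smul_opB2_add_opB2_comp_opC1 hH hlam0 hl1 hbc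
  apply smul_right_injective _ hlam0
  linear_combination (norm := module) lam • h2 - h2x + h1y

lemma IsBracket.comp_opB2_eq_neg (hb : IsBracket c b) (hH : IsHecke lam c)
    (hlam0 : lam ≠ 0) (hl1 : lam ≠ 1) (hbc : b ∘ₗ c = -b) : c ∘ₗ opB2 b = -opB2 b := by
  have h1 := hb.opB1_add_opB1_comp_opC2 hH hlam0 hl1
  have h1y := hb.smul_opB1_add_opB1_comp_opC2 hH hlam0 hl1 hbc
  have h2x := hb.smul_opB2_add_opB2_comp_opC1 hH hlam0 hl1 hbc
  apply smul_right_injective _ hlam0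
  linear_combination (norm := module) lam • h1 - h1y + h2x

lemma IsBracket.opB2_eq_neg_opB1 (hb : IsBracket c b) (hH : IsHecke lam c)
    (hlam0 : lam ≠ 0) (hl1 : lam ≠ 1) (hlam3 : 1 + lam + lam ^ 2 ≠ 0) (hbc : b ∘ₗ c = -b) :
    opB2 b = -opB1 b := by
  have hcb1 := hb.comp_opB1_eq_neg hH hlam0 hl1 hbc
  have hcb2 := hb.comp_opB2_eq_neg hH hlam0 hl1 hbc
  have h1 := hb.opB1_add_opB1_comp_opC2 hH hlam0 hl1
  have h1y := hb.smul_opB1_add_opB1_comp_opC2 hH hlam0 hl1 hbc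
  have hcb1y := hb.comp_opB1_comp_opC2 hH
  rw [← LinearMap.comp_assoc, hcb1, LinearMap.neg_comp] at hcb1y
  rw [hcb2] at h1
  rw [LinearMap.comp_add, hcb1, hcb2] at h1y
  apply smul_right_injective _ hlam3
  linear_combination (norm := module) lam • hcb1y - lam ^ 2 • h1 + (1 + lam) • h1y

lemma IsBracket.opB1_comp_opC2_eq_neg (hb : IsBracket c b) (hH : IsHecke lam c)
    (hlam0 : lam ≠ 0) (hl1 : lam ≠ 1) (hlam3 : 1 + lam + lam ^ 2 ≠ 0) (hbc : b ∘ₗ c = -b) :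
    opB1 b ∘ₗ opC2 c = -opB1 b := by
  have h1y := hb.smul_opB1_add_opB1_comp_opC2 hH hlam0 hl1 hbc
  rw [hb.opB2_eq_neg_opB1 hH hlam0 hl1 hlam3 hbc, add_neg_cancel, LinearMap.comp_zero] at h1y
  apply smul_right_injective _ hlam0
  linear_combination (norm := module) h1y

end Brackets

section Representation

variable {A : Type*} [Ring A] [Algebra K A]
variable {lam : K} {c : V ⊗[K] V →ₗ[K] V ⊗[K] V} {b : V ⊗[K] V →ₗ[K] V} {f : V →ₗ[K] A}

def mulPair (f : V →ₗ[K] A) : V ⊗[K] V →ₗ[K] A :=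
  LinearMap.mul' K A ∘ₗ TensorProduct.map f f

def mulTriple (f : V →ₗ[K] A) : V ⊗[K] (V ⊗[K] V) →ₗ[K] A :=
  LinearMap.mul' K A ∘ₗ TensorProduct.map f (mulPair f)

/-- `f` respects the defining relations of `U(V, c, b)`, i.e. it extends to an algebra map
`U(V, c, b) → A`. -/
def SatisfiesEnvRel (lam : K) (c : V ⊗[K] V →ₗ[K] V ⊗[K] V) (b : V ⊗[K] V →ₗ[K] V)
    (f : V →ₗ[K] A) : Prop :=
  mulPair f ∘ₗ c = lam • mulPair f + f ∘ₗ b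

@[simp]
lemma mulPair_tmul (v w : V) : mulPair f (v ⊗ₜ w) = f v * f w := rfl

lemma mulTriple_tmul (v : V) (z : V ⊗[K] V) : mulTriple f (v ⊗ₜ z) = f v * mulPair f z := rfl

lemma mulTriple_assoc_tmul (z : V ⊗[K] V) (w : V) :
    mulTriple f (TensorProduct.assoc K V V V (z ⊗ₜ w)) = mulPair f z * f w := by
  induction z using TensorProduct.induction_on with
  | zero => simp
  | tmul u v => simp [mulTriple_tmul, mul_assoc]
  | add x y hx hy => simp only [add_tmul, map_add, hx, hy, add_mul]

lemma satisfiesEnvRel_envIota : SatisfiesEnvRel lam c b (envIota lam c b) := by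
  have hmul : mulPair (envIota lam c b) =
      (RingQuot.mkAlgHom K (envRel lam c b)).toLinearMap ∘ₗ tensMul := by
    ext
    simp [envIota, tensMul]
  refine LinearMap.ext fun z => ?_
  simp only [LinearMap.comp_apply, LinearMap.add_apply, LinearMap.smul_apply, hmul]
  simpa [envIota] using RingQuot.mkAlgHom_rel K (s := envRel lam c b) ⟨z, rfl, rfl⟩

lemma SatisfiesEnvRel.apply (hf : SatisfiesEnvRel lam c b f) (z : V ⊗[K] V) :
    mulPair f (c z) = lam • mulPair f z + f (b z) :=
  LinearMap.congr_fun hf z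

lemma SatisfiesEnvRel.mulPair_comp_comp {W : Type*} [AddCommGroup W] [Module K W]
    (hf : SatisfiesEnvRel lam c b f) (g : W →ₗ[K] V ⊗[K] V) :
    mulPair f ∘ₗ c ∘ₗ g = lam • (mulPair f ∘ₗ g) + f ∘ₗ b ∘ₗ g := by
  rw [← LinearMap.comp_assoc, hf, LinearMap.add_comp, LinearMap.smul_comp, LinearMap.comp_assoc]

lemma SatisfiesEnvRel.mulTriple_comp_opC1 (hf : SatisfiesEnvRel lam c b f) :
    mulTriple f ∘ₗ opC1 c = lam • mulTriple f + mulPair f ∘ₗ opB1 b := by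
  refine LinearMap.ext fun t => ?_
  obtain ⟨s, rfl⟩ := (TensorProduct.assoc K V V V).surjective t
  induction s using TensorProduct.induction_on with
  | zero => simp
  | tmul z w =>
    simp [opC1, opB1, mulTriple_assoc_tmul, hf.apply, add_mul]
  | add x y hx hy => simp_all only [map_add, LinearMap.comp_apply, LinearMap.add_apply]

lemma SatisfiesEnvRel.mulTriple_comp_opC2 (hf : SatisfiesEnvRel lam c b f) :
    mulTriple f ∘ₗ opC2 c = lam • mulTriple f + mulPair f ∘ₗ opB2 b := by
  refine TensorProduct.ext' fun v z => ?_
  simp [opC2, opB2, mulTriple_tmul, hf.apply, mul_add]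

lemma SatisfiesEnvRel.braid_relation (hf : SatisfiesEnvRel lam c b f) (hbraid : BraidEq c) :
    lam ^ 2 • (mulPair f ∘ₗ opB1 b) + lam • (mulPair f ∘ₗ opB2 b ∘ₗ opC1 c)
        + mulPair f ∘ₗ opB1 b ∘ₗ opC2 c ∘ₗ opC1 c =
      lam ^ 2 • (mulPair f ∘ₗ opB2 b) + lam • (mulPair f ∘ₗ opB1 b ∘ₗ opC2 c)
        + mulPair f ∘ₗ opB2 b ∘ₗ opC1 c ∘ₗ opC2 c := by
  have h := congrArg (mulTriple f ∘ₗ ·) hbraid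
  simp only [← LinearMap.comp_assoc, hf.mulTriple_comp_opC1, hf.mulTriple_comp_opC2,
    LinearMap.add_comp, LinearMap.smul_comp] at h
  simp only [LinearMap.comp_assoc] at h ⊢
  linear_combination (norm := module) h

lemma SatisfiesEnvRel.bracket_comp_eq_neg (hf : SatisfiesEnvRel lam c b f) (hH : IsHecke lam c)
    (hinj : Function.Injective f) : b ∘ₗ c = -b := by
  have hc : c ∘ₗ (c + LinearMap.id) = lam • (c + LinearMap.id) := by
    rw [LinearMap.comp_add, hH.comp_self]
    module
  have h := hf.mulPair_comp_comp (c + LinearMap.id)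
  rw [hc, LinearMap.comp_smul] at h
  have hb : b ∘ₗ (c + LinearMap.id) = 0 := by
    refine (LinearMap.cancel_left hinj).mp ?_
    rw [LinearMap.comp_zero]
    linear_combination (norm := module) -h
  rw [LinearMap.comp_add, LinearMap.comp_id] at hb
  exact eq_neg_of_add_eq_zero_left hb

lemma SatisfiesEnvRel.bracket_comp_opB1_eq_zero (hf : SatisfiesEnvRel lam c b f)
    (hbraid : BraidEq c) (hH : IsHecke lam c) (hb : IsBracket c b) (hinj : Function.Injective f)
    (h2 : (2 : K) ≠ 0) (hlam0 : lam ≠ 0) (hl1 : lam ≠ 1) (hlam3 : 1 + lam + lam ^ 2 ≠ 0) :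
    b ∘ₗ opB1 b = 0 := by
  have hbc := hf.bracket_comp_eq_neg hH hinj
  have hb1x := opB1_comp_opC1_eq_neg hbc
  have hb1y := hb.opB1_comp_opC2_eq_neg hH hlam0 hl1 hlam3 hbc
  have hb1yx : opB1 b ∘ₗ opC2 c ∘ₗ opC1 c = opB1 b := by
    rw [← LinearMap.comp_assoc, hb1y, LinearMap.neg_comp, hb1x, neg_neg]
  have hb1xy : opB1 b ∘ₗ opC1 c ∘ₗ opC2 c = opB1 b := by
    rw [← LinearMap.comp_assoc, hb1x, LinearMap.neg_comp, hb1y, neg_neg]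
  have hm : mulPair f ∘ₗ opB1 b = 0 := by
    have h := hf.braid_relation hbraid
    simp only [hb.opB2_eq_neg_opB1 hH hlam0 hl1 hlam3 hbc, LinearMap.neg_comp,
      LinearMap.comp_neg, hb1x, hb1y, hb1xy, hb1yx] at h
    apply smul_right_injective _ (mul_ne_zero h2 hlam3)
    linear_combination (norm := module) h
  have hfb := hf.mulPair_comp_comp (opB1 b)
  rw [hb.comp_opB1_eq_neg hH hlam0 hl1 hbc, LinearMap.comp_neg, hm] at hfb
  refine (LinearMap.cancel_left hinj).mp ?_
  rw [LinearMap.comp_zero]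
  linear_combination (norm := module) -hfb

lemma SatisfiesEnvRel.jacobi_of_mark_one (hf : SatisfiesEnvRel 1 c b f) (hbraid : BraidEq c)
    (hH : IsHecke 1 c) (hb : IsBracket c b) (hinj : Function.Injective f) :
    b ∘ₗ opB1 b ∘ₗ (LinearMap.id - opC2 c + opC2 c ∘ₗ opC1 c) = 0 ∧
      b ∘ₗ opB2 b ∘ₗ (LinearMap.id - opC1 c + opC1 c ∘ₗ opC2 c) = 0 := by
  have hbc := hf.bracket_comp_eq_neg hH hinj
  have hbraid' : mulPair f ∘ₗ opB2 b ∘ₗ opC1 c + f ∘ₗ b ∘ₗ opB2 b =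
      mulPair f ∘ₗ opB1 b ∘ₗ opC2 c + f ∘ₗ b ∘ₗ opB1 b := by
    have h := hf.braid_relation hbraid
    rw [← hb.1, ← hb.2, hf.mulPair_comp_comp, hf.mulPair_comp_comp] at h
    linear_combination (norm := module) h
  have hb1y := hf.mulPair_comp_comp (opB1 b ∘ₗ opC2 c)
  have hb2x := hf.mulPair_comp_comp (opB2 b ∘ₗ opC1 c)
  simp only [hb.comp_opB1_comp_opC2 hH, hb.comp_opB2_comp_opC1 hH, sub_self, zero_smul,
    one_smul, zero_add] at hb1y hb2x
  have hbcb1 : b ∘ₗ c ∘ₗ opB1 b = -(b ∘ₗ opB1 b) := by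
    rw [← LinearMap.comp_assoc, hbc, LinearMap.neg_comp]
  have hbcb2 : b ∘ₗ c ∘ₗ opB2 b = -(b ∘ₗ opB2 b) := by
    rw [← LinearMap.comp_assoc, hbc, LinearMap.neg_comp]
  constructor <;> refine (LinearMap.cancel_left hinj).mp ?_ <;>
    simp only [LinearMap.comp_add, LinearMap.comp_sub, LinearMap.comp_id, LinearMap.comp_zero,
      ← hb.1, ← hb.2, hbcb1, hbcb2, LinearMap.comp_neg]
  · linear_combination (norm := module) hb1y - hbraid'
  · linear_combination (norm := module) hb2x + hbraid'

end Representation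

lemma qFac_three (lam : K) : qFac lam 3 = (1 + lam) * (1 + lam + lam ^ 2) := by
  simp only [qFac, qInt, Finset.prod_range_succ, Finset.prod_range_zero, Finset.sum_range_succ,
    Finset.sum_range_zero]
  ring

/-- If `char K ≠ 2`, `(V,c)` is a braided vector space of Hecke type of mark `lam ≠ 0`
with `(3)!_lam ≠ 0`, `b` is a `c`-bracket and `ι_{c,b} : V → U(V,c,b)` is injective, then
`b ∘ c = -b`, `b ∘ b₁ ∘ (lam²•id - lam•c₂ + c₂∘c₁) = 0` and
`b ∘ b₂ ∘ (lam²•id - lam•c₁ + c₁∘c₂) = 0`. -/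
theorem bracket_identities_of_envIota_injective
    (hchar : ringChar K ≠ 2) (lam : K) (hlam0 : lam ≠ 0) (hfac : qFac lam 3 ≠ 0)
    (c : V ⊗[K] V →ₗ[K] V ⊗[K] V) (hbraid : BraidEq c) (hHecke : IsHecke lam c)
    (b : V ⊗[K] V →ₗ[K] V) (hb : IsBracket c b)
    (hinj : Function.Injective (envIota lam c b)) :
    b ∘ₗ c = -b ∧
    b ∘ₗ opB1 b ∘ₗ (lam ^ 2 • LinearMap.id - lam • opC2 c + opC2 c ∘ₗ opC1 c) = 0 ∧
    b ∘ₗ opB2 b ∘ₗ (lam ^ 2 • LinearMap.id - lam • opC1 c + opC1 c ∘ₗ opC2 c) = 0 := by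
  have hf : SatisfiesEnvRel lam c b (envIota lam c b) := satisfiesEnvRel_envIota
  have hbc := hf.bracket_comp_eq_neg hHecke hinj
  refine ⟨hbc, ?_⟩
  rcases eq_or_ne lam 1 with rfl | hl1
  · simpa using hf.jacobi_of_mark_one hbraid hHecke hb hinj
  have hlam3 : 1 + lam + lam ^ 2 ≠ 0 := right_ne_zero_of_mul (qFac_three lam ▸ hfac)
  have hbb1 := hf.bracket_comp_opB1_eq_zero hbraid hHecke hb hinj (Ring.two_ne_zero hchar)
    hlam0 hl1 hlam3
  have hbb2 : b ∘ₗ opB2 b = 0 := by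
    rw [hb.opB2_eq_neg_opB1 hHecke hlam0 hl1 hlam3 hbc, LinearMap.comp_neg, hbb1, neg_zero]
  simp only [← LinearMap.comp_assoc, hbb1, hbb2, LinearMap.zero_comp, and_self]

end
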